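/- Let F be a field, let A be an (n−1)×(n−1) symmetric matrix over F, let y ∈ F^{n−1}, let b ∈ F, and let B be the n×n symmetric matrix with block form B = [[A, y], [y^T, b]]. Then rank A ≤ rank B ≤ rank A + 2. Moreover: (i) rank B = rank A + 2 if and only if y is not in the column space of A; and (ii) rank B = rank A + 1 if and only if y is in the column space of A and b ≠ x^T A x for the vector x with y = Ax (this condition being independent of the choice of such x). -/

import Mathlib

/-!
Write `B = [P | w]` with `P = [A; yᵀ]` and `w = (y, b)`. Adjoining a column raises the rank by
one exactly when it is not in the column space of the others, so `rank B = rank P + [w ∉ C(P)]`,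
and after transposing, `rank P = rank [Aᵀ | y] = rank A + [y ∉ C(A)]`.
If `y = A u`, then `w ∈ C(P)` means `A t = y` and `yᵀ t = b` for some `t`, and symmetry of `A`
gives `yᵀ t = uᵀ A t = uᵀ A u` for every such `t`.
-/

open Matrix

/-- The minor of a square matrix `B` lying in the rows indexed by `α` and the columns
indexed by `β` (each listed in increasing order); junk value `0` if `α.card ≠ β.card`. -/
def qMinor {R : Type*} [CommRing R] {m : Type*} [Fintype m] [LinearOrder m]
    (B : Matrix m m R) (α β : Finset m) : R :=
  if h : β.card = α.card then
    (Matrix.of fun i j : Fin α.card =>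
      B (α.orderEmbOfFin rfl i) (β.orderEmbOfFin h j)).det
  else 0

/-- `α` and `β` index a quasi-principal submatrix of order `k`, i.e.
`|α| = |β| = k` and `k - 1 ≤ |α ∩ β| (≤ k)`. -/
def IsQPPair {m : Type*} [DecidableEq m] (k : ℕ) (α β : Finset m) : Prop :=
  α.card = k ∧ β.card = k ∧ k - 1 ≤ (α ∩ β).card

/-- All quasi-principal minors of `B` of order `k` are nonzero. -/
def QPAllNonzero {R : Type*} [CommRing R] {m : Type*} [Fintype m] [LinearOrder m]
    (B : Matrix m m R) (k : ℕ) : Prop :=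
  ∀ α β : Finset m, IsQPPair k α β → qMinor B α β ≠ 0

/-- All quasi-principal minors of `B` of order `k` are zero. -/
def QPAllZero {R : Type*} [CommRing R] {m : Type*} [Fintype m] [LinearOrder m]
    (B : Matrix m m R) (k : ℕ) : Prop :=
  ∀ α β : Finset m, IsQPPair k α β → qMinor B α β = 0

/-- The three possible letters of a qpr-sequence. -/
inductive QPR : Type
  | A
  | S
  | N
deriving DecidableEq

open Classical in
/-- The letter of the qpr-sequence of `B` corresponding to order `k`:
`A` if all quasi-principal minors of order `k` are nonzero, `N` if all are zero,
and `S` otherwise. -/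
noncomputable def qprEntry {R : Type*} [CommRing R] {m : Type*} [Fintype m] [LinearOrder m]
    (B : Matrix m m R) (k : ℕ) : QPR :=
  if QPAllNonzero B k then QPR.A
  else if QPAllZero B k then QPR.N
  else QPR.S

/-- A sequence of letters `q 0, …, q (n-1)` (standing for `q_1 ⋯ q_n`) is attainable
over `F` if it is the qpr-sequence of an `n × n` symmetric matrix over `F`. -/
def Attainable (F : Type*) [Field F] {n : ℕ} (q : Fin n → QPR) : Prop :=
  ∃ B : Matrix (Fin n) (Fin n) F, B.IsSymm ∧ ∀ k : Fin n, qprEntry B ((k : ℕ) + 1) = q k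

/-- The Schur complement `B/B[γ] = B[γᶜ] - B[γᶜ, γ] B[γ]⁻¹ B[γ, γᶜ]`,
with rows and columns indexed by `γᶜ` (indexing inherited from `B`). -/
noncomputable def schurCompl {R : Type*} [CommRing R] {n : ℕ}
    (B : Matrix (Fin n) (Fin n) R) (γ : Finset (Fin n)) :
    Matrix ↥(γᶜ) ↥(γᶜ) R :=
  B.submatrix (fun i : ↥(γᶜ) => (i : Fin n)) (fun j : ↥(γᶜ) => (j : Fin n)) -
    B.submatrix (fun i : ↥(γᶜ) => (i : Fin n)) (fun j : ↥γ => (j : Fin n)) *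
      (B.submatrix (fun i : ↥γ => (i : Fin n)) fun j : ↥γ => (j : Fin n))⁻¹ *
      B.submatrix (fun i : ↥γ => (i : Fin n)) fun j : ↥(γᶜ) => (j : Fin n)

/-- The `(m+1) × (m+1)` matrix with block form `[[A, x], [yᵀ, b]]`. -/
def borderMat {R : Type*} [CommRing R] {m : ℕ} (A : Matrix (Fin m) (Fin m) R)
    (x y : Fin m → R) (b : R) : Matrix (Fin (m + 1)) (Fin (m + 1)) R :=
  Matrix.of fun i j =>
    if hi : (i : ℕ) < m then
      if hj : (j : ℕ) < m then A ⟨i, hi⟩ ⟨j, hj⟩ else x ⟨i, hi⟩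
    else
      if hj : (j : ℕ) < m then y ⟨j, hj⟩ else b

open Submodule
open scoped Classical

theorem finrank_span_insert_eq {K V : Type*} [Field K] [AddCommGroup V] [Module K V]
    [Module.Finite K V] (v : V) (s : Set V) :
    Module.finrank K (span K (insert v s)) =
      Module.finrank K (span K s) + if v ∈ span K s then 0 else 1 := by
  rw [span_insert, sup_comm]
  split_ifs with hv
  · rw [sup_eq_left.2 ((span_singleton_le_iff_mem _ _).2 hv), add_zero]
  · exact finrank_sup_span_singleton hv

theorem Matrix.rank_eq_rank_submatrix_castSucc_add {F ι : Type*} [Field F] [Finite ι] {n : ℕ}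
    (M : Matrix ι (Fin (n + 1)) F) :
    M.rank = (M.submatrix id Fin.castSucc).rank +
      if ∃ t, M.submatrix id Fin.castSucc *ᵥ t = M.col (Fin.last n) then 0 else 1 := by
  have hcols : M.col = Fin.snoc (M.submatrix id Fin.castSucc).col (M.col (Fin.last n)) := by
    ext j : 1
    refine Fin.lastCases ?_ (fun j => ?_) j
    · rw [Fin.snoc_last]
    · rw [Fin.snoc_castSucc]
      rfl
  rw [rank_eq_finrank_span_cols M, hcols, Fin.range_snoc, finrank_span_insert_eq,
    ← rank_eq_finrank_span_cols, ← range_mulVecLin]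
  simp only [LinearMap.mem_range, mulVecLin_apply, Fin.snoc_last]

section borderMat

variable {R : Type*} [CommRing R] {m : ℕ} (A : Matrix (Fin m) (Fin m) R) (x y : Fin m → R)
  (b : R)

theorem borderMat_submatrix_castSucc :
    (borderMat A x y b).submatrix Fin.castSucc Fin.castSucc = A := by
  ext i j
  simp [borderMat]

theorem borderMat_col_last : (borderMat A x y b).col (Fin.last m) = Fin.snoc x b := by
  ext i
  refine Fin.lastCases ?_ (fun i => ?_) i <;> simp [borderMat]

theorem borderMat_submatrix_castSucc_transpose_col_last :
    ((borderMat A x y b).submatrix id Fin.castSucc)ᵀ.col (Fin.last m) = y := by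
  ext j
  simp [borderMat]

theorem borderMat_submatrix_castSucc_mulVec (t : Fin m → R) :
    (borderMat A x y b).submatrix id Fin.castSucc *ᵥ t = Fin.snoc (A *ᵥ t) (y ⬝ᵥ t) := by
  ext i
  refine Fin.lastCases ?_ (fun i => ?_) i <;> simp [borderMat, mulVec, dotProduct]

end borderMat

theorem rank_borderMat {F : Type*} [Field F] {m : ℕ} (A : Matrix (Fin m) (Fin m) F)
    (x y : Fin m → F) (b : F) :
    (borderMat A x y b).rank = A.rank + (if ∃ t, Aᵀ *ᵥ t = y then 0 else 1) +
      if ∃ t, A *ᵥ t = x ∧ y ⬝ᵥ t = b then 0 else 1 := by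
  set B := borderMat A x y b
  have hrows : (B.submatrix id Fin.castSucc).rank =
      A.rank + if ∃ t, Aᵀ *ᵥ t = y then 0 else 1 := by
    have hAt : (B.submatrix id Fin.castSucc)ᵀ.submatrix id Fin.castSucc = Aᵀ := by
      rw [← borderMat_submatrix_castSucc A x y b]
      rfl
    rw [← rank_transpose, rank_eq_rank_submatrix_castSucc_add, hAt, rank_transpose,
      borderMat_submatrix_castSucc_transpose_col_last]
  simp_rw [rank_eq_rank_submatrix_castSucc_add B, hrows, B, borderMat_col_last,
    borderMat_submatrix_castSucc_mulVec, Fin.snoc_inj]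

theorem Matrix.IsSymm.dotProduct_mulVec_self_eq {R : Type*} [CommRing R] {m : Type*} [Fintype m]
    {A : Matrix m m R} (hA : A.IsSymm) {u t : m → R} (h : A *ᵥ u = A *ᵥ t) :
    u ⬝ᵥ A *ᵥ u = t ⬝ᵥ A *ᵥ t := by
  calc u ⬝ᵥ A *ᵥ u = u ⬝ᵥ A *ᵥ t := by rw [h]
    _ = Aᵀ *ᵥ u ⬝ᵥ t := by rw [dotProduct_mulVec, mulVec_transpose]
    _ = t ⬝ᵥ A *ᵥ t := by rw [hA.eq, h, dotProduct_comm]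

theorem Matrix.IsSymm.exists_mulVec_eq_and_dotProduct_eq_iff {R : Type*} [CommRing R]
    {m : Type*} [Fintype m] {A : Matrix m m R} (hA : A.IsSymm) {u y : m → R} (hu : A *ᵥ u = y)
    (b : R) : (∃ t, A *ᵥ t = y ∧ y ⬝ᵥ t = b) ↔ b = u ⬝ᵥ A *ᵥ u := by
  constructor
  · rintro ⟨t, ht, rfl⟩
    rw [dotProduct_comm, ← ht, hA.dotProduct_mulVec_self_eq (hu.trans ht.symm)]
  · rintro rfl
    exact ⟨u, hu, by rw [← hu, dotProduct_comm]⟩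

/-- for symmetric `A` and `B = [[A, y], [yᵀ, b]]` one has
`rank A ≤ rank B ≤ rank A + 2`; moreover (i) `rank B = rank A + 2` iff `y ∉ C(A)`, and
(ii) `rank B = rank A + 1` iff `y ∈ C(A)` and `b ≠ xᵀAx` for the (any) vector `x` with
`y = Ax`. -/
theorem stmt_14 {F : Type*} [Field F] {m : ℕ} (A : Matrix (Fin m) (Fin m) F)
    (hA : A.IsSymm) (y : Fin m → F) (b : F) :
    A.rank ≤ (borderMat A y y b).rank ∧
    (borderMat A y y b).rank ≤ A.rank + 2 ∧
    ((borderMat A y y b).rank = A.rank + 2 ↔ ¬ ∃ u, A *ᵥ u = y) ∧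
    ((borderMat A y y b).rank = A.rank + 1 ↔
      (∃ u, A *ᵥ u = y) ∧ ∀ u, A *ᵥ u = y → b ≠ u ⬝ᵥ A *ᵥ u) := by
  have hrank := rank_borderMat A y y b
  rw [hA.eq] at hrank
  by_cases hy : ∃ u, A *ᵥ u = y
  · obtain ⟨u, hu⟩ := hy
    rw [hA.exists_mulVec_eq_and_dotProduct_eq_iff hu, if_pos ⟨u, hu⟩] at hrank
    have hcond : ((∃ u, A *ᵥ u = y) ∧ ∀ t, A *ᵥ t = y → b ≠ t ⬝ᵥ A *ᵥ t) ↔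
        b ≠ u ⬝ᵥ A *ᵥ u :=
      ⟨fun h => h.2 u hu, fun hb => ⟨⟨u, hu⟩, fun t ht => by
        rwa [hA.dotProduct_mulVec_self_eq (ht.trans hu.symm)]⟩⟩
    rw [hcond]
    split_ifs at hrank with hb
    · exact ⟨by omega, by omega, iff_of_false (by omega) (not_not.2 ⟨u, hu⟩),
        iff_of_false (by omega) (not_not.2 hb)⟩
    · exact ⟨by omega, by omega, iff_of_false (by omega) (not_not.2 ⟨u, hu⟩),
        iff_of_true (by omega) hb⟩
  · have hcol : ¬ ∃ t, A *ᵥ t = y ∧ y ⬝ᵥ t = b := fun ⟨t, ht, _⟩ => hy ⟨t, ht⟩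
    rw [if_neg hy, if_neg hcol] at hrank
    exact ⟨by omega, by omega, iff_of_true (by omega) hy,
      iff_of_false (by omega) fun h => hy h.1⟩
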